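/- arXiv:1607.04470 — 4 statements merged into one kernel-verified Lean document; each statement's English description precedes it below -/
import Mathlib

section
/- A product of two approximately path-connected topological spaces is approximately path-connected. -/
/-- A topological space `X` is approximately path-connected if for every finite
collection of nonempty open sets `V k` there is a continuous path `γ : [0,1] → X`
meeting each `V k` at some interior time `t ∈ (0,1)`. -/
def ApproxPathConnected (X : Type*) [TopologicalSpace X] : Prop :=
  ∀ (s : ℕ) (V : Fin s → Set X), (∀ k, IsOpen (V k)) → (∀ k, (V k).Nonempty) →
    ∃ γ : C(unitInterval, X), ∀ k, ∃ t : unitInterval,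
      (t : ℝ) ∈ Set.Ioo (0 : ℝ) 1 ∧ γ t ∈ V k

open Set

theorem approxPathConnected_prod {X Y : Type*} [TopologicalSpace X] [TopologicalSpace Y]
    (hX : ApproxPathConnected X) (hY : ApproxPathConnected Y) :
    ApproxPathConnected (X × Y) := by
  intro s V hVopen hVne
  have hex : ∀ k, ∃ U : Set X, ∃ W : Set Y,
      IsOpen U ∧ IsOpen W ∧ U.Nonempty ∧ W.Nonempty ∧ U ×ˢ W ⊆ V k := by
    intro k
    obtain ⟨⟨x, y⟩, hxy⟩ := hVne k
    obtain ⟨U, W, hU, hW, hx, hy, hsub⟩ := isOpen_prod_iff.mp (hVopen k) x y hxy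
    exact ⟨U, W, hU, hW, ⟨x, hx⟩, ⟨y, hy⟩, hsub⟩
  choose U W hU hW hUne hWne hsub using hex
  obtain ⟨α, hα⟩ := hX s U hU hUne
  obtain ⟨β, hβ⟩ := hY s W hW hWne
  choose t ht htα using hα
  choose u hu huβ using hβ
  -- marker points
  set m : Fin s → ℝ := fun k => ((k : ℝ) + 1) / (s + 1) with hm
  have hmmem : ∀ k, m k ∈ unitInterval := by
    intro k
    constructor
    · positivity
    · rw [div_le_one (by positivity)]
      have : (k : ℝ) + 1 ≤ s := by
        have := k.2
        exact_mod_cast this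
      linarith
  -- the interpolation sum
  have key : ∀ (v : Fin s → unitInterval) (k : Fin s),
      (∑ j : Fin s, (v j : ℝ) * max 0 (1 - (s + 1) * |m k - m j|)) = v k := by
    intro v k
    rw [Finset.sum_eq_single k]
    · simp
    · intro j _ hjk
      have h1 : (1 : ℝ) ≤ |(k : ℝ) - (j : ℝ)| := by
        have hne : (k : ℕ) ≠ (j : ℕ) := fun h => hjk (Fin.ext h.symm)
        have : (k : ℤ) ≠ (j : ℤ) := by exact_mod_cast hne
        have := Int.one_le_abs (sub_ne_zero.mpr this)
        calc (1 : ℝ) ≤ |((k : ℤ) - (j : ℤ) : ℤ)| := by exact_mod_cast this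
          _ = |(k : ℝ) - (j : ℝ)| := by push_cast; ring_nf
      have h2 : |m k - m j| = |(k : ℝ) - (j : ℝ)| / (s + 1) := by
        rw [hm]
        rw [div_sub_div_same, abs_div, abs_of_pos (by positivity : (0:ℝ) < (s:ℝ)+1)]
        ring_nf
      have h3 : (1 : ℝ) ≤ ((s : ℝ) + 1) * |m k - m j| := by
        rw [h2, mul_div_cancel₀ _ (by positivity : ((s:ℝ)+1) ≠ 0)]
        exact h1
      have : max 0 (1 - ((s : ℝ) + 1) * |m k - m j|) = 0 :=
        max_eq_left (by linarith)
      rw [this, mul_zero]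
    · intro h; exact absurd (Finset.mem_univ k) h
  set F : ℝ → ℝ := fun x => ∑ j : Fin s, (t j : ℝ) * max 0 (1 - (s + 1) * |x - m j|) with hF
  set G : ℝ → ℝ := fun x => ∑ j : Fin s, (u j : ℝ) * max 0 (1 - (s + 1) * |x - m j|) with hG
  have hFc : Continuous F := by
    apply continuous_finset_sum
    intro j _
    fun_prop
  have hGc : Continuous G := by
    apply continuous_finset_sum
    intro j _
    fun_prop
  refine ⟨⟨fun q => (α (projIcc 0 1 zero_le_one (F q)), β (projIcc 0 1 zero_le_one (G q))), ?_⟩, ?_⟩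
  · exact (α.continuous.comp (continuous_projIcc.comp (hFc.comp continuous_subtype_val))).prodMk
      (β.continuous.comp (continuous_projIcc.comp (hGc.comp continuous_subtype_val)))
  · intro k
    refine ⟨⟨m k, hmmem k⟩, ?_, ?_⟩
    · constructor
      · have : (0:ℝ) < (k : ℝ) + 1 := by positivity
        exact div_pos this (by positivity)
      · show m k < 1
        rw [hm]
        simp only
        rw [div_lt_one (by positivity)]
        have := k.2
        have : (k : ℝ) < s := by exact_mod_cast this
        linarith
    · have hFk : F (m k) = (t k : ℝ) := key t k
      have hGk : G (m k) = (u k : ℝ) := key u k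
      apply hsub k
      simp only [ContinuousMap.coe_mk]
      rw [hFk, hGk]
      rw [show ((t k : ℝ)) = ((t k : unitInterval) : ℝ) from rfl]
      rw [projIcc_val zero_le_one (t k), projIcc_val zero_le_one (u k)]
      exact ⟨htα k, huβ k⟩
end

section
/- The topologist's sine curve closure A = {(x, sin(1/x)) : 0 < x ≤ 1} ∪ {(0, y) : −1 ≤ y ≤ 1} ⊆ ℝ² is approximately path-connected. -/
open Real

/-- The closed topologist's sine curve. -/
def sineCurve : Set (ℝ × ℝ) :=
  {p | ∃ x : ℝ, 0 < x ∧ x ≤ 1 ∧ p = (x, Real.sin (1 / x))} ∪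
    {p | p.1 = 0 ∧ p.2 ∈ Set.Icc (-1 : ℝ) 1}

lemma sineCurve_dense_graph (p : ℝ × ℝ) (hp : p ∈ sineCurve) (U : Set (ℝ × ℝ))
    (hU : IsOpen U) (hpU : p ∈ U) :
    ∃ x : ℝ, 0 < x ∧ x ≤ 1 ∧ (x, Real.sin (1 / x)) ∈ U := by
  rcases hp with ⟨x, hx0, hx1, rfl⟩ | ⟨h1, h2⟩
  · exact ⟨x, hx0, hx1, hpU⟩
  · obtain ⟨ε, hε, hball⟩ := Metric.isOpen_iff.1 hU p hpU
    obtain ⟨n, hn⟩ := exists_nat_gt ((1 / ε + π / 2) / (2 * π))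
    set y := p.2 with hy
    set c : ℝ := Real.arcsin y + (n + 1) * (2 * π) with hc
    have hπ : (0:ℝ) < 2 * π := by positivity
    have h2πn : 1 / ε + π / 2 < (n:ℝ) * (2 * π) := by
      rw [div_lt_iff₀ hπ] at hn; linarith
    have harc : -(π/2) ≤ Real.arcsin y := Real.neg_pi_div_two_le_arcsin y
    have hcε : 1 / ε < c := by
      have h1 : ((n:ℝ)+1) * (2*π) = (n:ℝ) * (2*π) + 2*π := by ring
      nlinarith [Real.pi_gt_three]
    have hc1 : 1 < c := by
      have h0 : 0 < 1 / ε := by positivity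
      nlinarith [Real.pi_gt_three]
    have hc0 : 0 < c := lt_trans one_pos hc1
    have hsin : Real.sin (1 / (1 / c)) = y := by
      rw [one_div_one_div, hc]
      have := Real.sin_add_nat_mul_two_pi (Real.arcsin y) (n + 1)
      push_cast at this
      rw [this]
      exact Real.sin_arcsin h2.1 h2.2
    refine ⟨1 / c, by positivity, ?_, ?_⟩
    · rw [div_le_one hc0]; linarith
    · apply hball
      have hpe : p = (0, y) := Prod.ext h1 rfl
      rw [Metric.mem_ball, hsin, hpe, Prod.dist_eq]
      simp only [dist_self]
      have h1c : dist (1 / c) (0:ℝ) = 1 / c := by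
        rw [Real.dist_eq, sub_zero, abs_of_pos (by positivity)]
      rw [h1c]
      have hlt : 1 / c < ε := by
        rw [div_lt_iff₀ hc0]
        have h := (div_lt_iff₀ hε).1 hcε
        nlinarith
      exact lt_of_le_of_lt (max_le le_rfl (by positivity)) hlt

theorem sineCurve_approxPathConnected : ApproxPathConnected sineCurve := by
  intro s V hVopen hVne
  have hUex : ∀ k, ∃ U : Set (ℝ × ℝ), IsOpen U ∧ V k = (Subtype.val : sineCurve → ℝ × ℝ) ⁻¹' U := by
    intro k
    rcases isOpen_induced_iff.1 (hVopen k) with ⟨U, hU, hUV⟩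
    exact ⟨U, hU, hUV.symm⟩
  choose U hUopen hUV using hUex
  have hxex : ∀ k, ∃ x : ℝ, 0 < x ∧ x ≤ 1 ∧ (x, Real.sin (1 / x)) ∈ U k := by
    intro k
    obtain ⟨p, hp⟩ := hVne k
    have hpU : (p : ℝ × ℝ) ∈ U k := by rw [hUV k] at hp; exact hp
    exact sineCurve_dense_graph p p.2 (U k) (hUopen k) hpU
  choose x hx0 hx1 hxU using hxex
  set A : Finset ℝ := insert 1 (Finset.univ.image x) with hA
  have hAne : A.Nonempty := Finset.insert_nonempty _ _
  set a : ℝ := A.min' hAne with ha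
  have ha0 : 0 < a := by
    rw [ha, Finset.lt_min'_iff]
    intro b hb
    rcases Finset.mem_insert.1 hb with rfl | hb
    · exact one_pos
    · obtain ⟨k, _, rfl⟩ := Finset.mem_image.1 hb; exact hx0 k
  have ha1 : a ≤ 1 := Finset.min'_le _ _ (Finset.mem_insert_self _ _)
  have hax : ∀ k, a ≤ x k := fun k =>
    Finset.min'_le _ _ (Finset.mem_insert_of_mem (Finset.mem_image_of_mem x (Finset.mem_univ k)))
  have hb : 0 < 1 - a / 2 := by linarith
  set f : unitInterval → ℝ := fun t => a / 2 + (1 - a / 2) * (1 - |2 * (t : ℝ) - 1|) with hf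
  have habs : ∀ t : unitInterval, |2 * (t : ℝ) - 1| ≤ 1 := by
    intro t
    rw [abs_le]
    constructor
    · linarith [t.2.1]
    · linarith [t.2.2]
  have hfpos : ∀ t, 0 < f t := by
    intro t
    have h2 : 0 ≤ (1 - a / 2) * (1 - |2 * (t : ℝ) - 1|) :=
      mul_nonneg hb.le (by linarith [habs t])
    have : f t = a / 2 + (1 - a / 2) * (1 - |2 * (t : ℝ) - 1|) := rfl
    rw [this]; linarith
  have hfle : ∀ t, f t ≤ 1 := by
    intro t
    have h0 : 0 ≤ |2 * (t : ℝ) - 1| := abs_nonneg _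
    have : f t = a / 2 + (1 - a / 2) * (1 - |2 * (t : ℝ) - 1|) := rfl
    rw [this]; nlinarith
  have hfc : Continuous f := by
    rw [hf]; fun_prop
  refine ⟨⟨fun t => ⟨(f t, Real.sin (1 / f t)), Or.inl ⟨f t, hfpos t, hfle t, rfl⟩⟩, ?_⟩, ?_⟩
  · exact Continuous.subtype_mk
      (hfc.prodMk (Real.continuous_sin.comp
        (continuous_const.div hfc fun t => (hfpos t).ne'))) _
  · intro k
    set t0 : ℝ := (x k - a / 2) / (2 * (1 - a / 2)) with ht0
    have ht0pos : 0 < t0 := div_pos (by linarith [hax k]) (by linarith)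
    have ht0le : t0 ≤ 1 / 2 := by
      rw [ht0, div_le_div_iff₀ (by linarith) (by norm_num)]
      linarith [hx1 k]
    refine ⟨⟨t0, ht0pos.le, by linarith⟩, ⟨ht0pos, by linarith⟩, ?_⟩
    rw [hUV k]
    have hft : f ⟨t0, ht0pos.le, by linarith⟩ = x k := by
      have h1 : f ⟨t0, ht0pos.le, by linarith⟩ = a / 2 + (1 - a / 2) * (1 - |2 * t0 - 1|) := rfl
      have h2 : |2 * t0 - 1| = 1 - 2 * t0 := (abs_of_nonpos (by linarith)).trans (by ring)
      have hne : 2 * (1 - a / 2) ≠ 0 := by positivity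
      have key : (1 - a / 2) * (1 - (1 - 2 * t0)) = x k - a / 2 := by
        rw [show (1 - a / 2) * (1 - (1 - 2 * t0)) =
            (x k - a / 2) * (2 * (1 - a / 2) / (2 * (1 - a / 2))) by rw [ht0]; ring,
          div_self hne, mul_one]
      rw [h1, h2]
      linarith
    show ((f _, Real.sin (1 / f _)) : ℝ × ℝ) ∈ U k
    rw [hft]
    exact hxU k
end

section
/- Let X be a Hausdorff topological space such that for every finite DISJOINT collection of nonempty open sets V₁, ..., V_s there is a continuous path γ : [0,1] → X meeting each V_k on (0,1). Then X is approximately path-connected (i.e., the same holds without the disjointness assumption). -/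
/-- In a Hausdorff space, it suffices to verify the approximate path-connectedness
condition for finite pairwise disjoint collections of nonempty open sets. -/
theorem approxPathConnected_of_disjoint_condition (X : Type*) [TopologicalSpace X]
    [T2Space X]
    (h : ∀ 𝒱 : Finset (Set X), (∀ V ∈ 𝒱, IsOpen V) → (∀ V ∈ 𝒱, V.Nonempty) →
      (↑𝒱 : Set (Set X)).Pairwise Disjoint →
      ∃ γ : C(unitInterval, X), ∀ V ∈ 𝒱, ∃ t : unitInterval,
        (t : ℝ) ∈ Set.Ioo (0 : ℝ) 1 ∧ γ t ∈ V) :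
    ApproxPathConnected X := by
  classical
  intro s V hopen hne
  choose x hx using hne
  obtain ⟨U, hU, hUd⟩ := (Set.finite_range x).t2_separation
  set W : Fin s → Set X := fun k => U (x k) ∩ ⋂ j, ⋂ _ : x j = x k, V j with hW
  have hWopen : ∀ k, IsOpen (W k) := fun k =>
    ((hU (x k)).2).inter (isOpen_iInter_of_finite fun j =>
      isOpen_iInter_of_finite fun _ => hopen j)
  have hWmem : ∀ k, x k ∈ W k := by
    intro k
    refine ⟨(hU (x k)).1, ?_⟩
    simp only [Set.mem_iInter]
    intro j hj
    rw [← hj]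
    exact hx j
  have hWeq : ∀ j k, x j = x k → W j = W k := by
    intro j k hjk
    simp only [hW]
    rw [hjk]
  have hWsub : ∀ k, W k ⊆ V k := fun k =>
    (Set.inter_subset_right).trans (Set.iInter_subset_of_subset k
      (Set.iInter_subset _ rfl))
  obtain ⟨γ, hγ⟩ := h (Finset.image (fun k => W k) Finset.univ)
    (by
      intro A hA
      simp only [Finset.mem_image] at hA
      obtain ⟨k, _, rfl⟩ := hA
      exact hWopen k)
    (by
      intro A hA
      simp only [Finset.mem_image] at hA
      obtain ⟨k, _, rfl⟩ := hA
      exact ⟨x k, hWmem k⟩)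
    (by
      intro A hA B hB hAB
      simp only [Finset.coe_image, Set.mem_image] at hA hB
      obtain ⟨j, _, rfl⟩ := hA
      obtain ⟨k, _, rfl⟩ := hB
      have hjk : x j ≠ x k := fun e => hAB (hWeq j k e)
      have : Disjoint (U (x j)) (U (x k)) :=
        hUd (Set.mem_range_self j) (Set.mem_range_self k) hjk
      exact (this.mono Set.inter_subset_left Set.inter_subset_left))
  refine ⟨γ, fun k => ?_⟩
  obtain ⟨t, ht, htW⟩ := hγ (W k) (Finset.mem_image_of_mem _ (Finset.mem_univ k))
  exact ⟨t, ht, hWsub k htW⟩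
end

section
/- Let U_{n,λ} and V_n be the n×n matrices defined on the standard basis e₁,…,e_n by U_{n,λ}e_j = λ^{j−1}e_j and V_n e_j = e_{j+1} (indices mod n, i.e., V_n e_n = e₁), where λ ∈ ℂ with |λ| = 1. Then U_{n,λ} and V_n are unitary and ‖U_{n,λ}V_n − λ V_n U_{n,λ}‖ = |λⁿ − 1|. -/
/-!
Both matrices are unitary for structural reasons: `U` is diagonal with unimodular entries and `V`
is a permutation matrix. Since `U V e_j = λ^{j+1} e_{j+1} = λ V U e_j` except when the shift wraps
around, `U V - λ V U` is the multiple `(1 - λⁿ) E_{1n}` of a matrix unit, whose operator norm is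
`|1 - λⁿ|` by the C⋆-identity.
-/

open scoped Matrix.Norms.L2Operator

theorem RCLike.mem_unitary_of_norm_eq_one {𝕜 : Type*} [RCLike 𝕜] {z : 𝕜} (hz : ‖z‖ = 1) :
    z ∈ unitary 𝕜 := by
  rw [Unitary.mem_iff, RCLike.star_def, RCLike.conj_mul, RCLike.mul_conj, hz]
  simp

theorem val_finRotate {n : ℕ} (j : Fin n) : (finRotate n j : ℕ) = ((j : ℕ) + 1) % n := by
  cases n with
  | zero => exact j.elim0
  | succ m =>
    rw [coe_finRotate]
    split_ifs with h
    · simp [h]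
    · rw [Nat.mod_eq_of_lt (by simpa using Fin.val_lt_last h)]

namespace Matrix

variable {n : Type*} [Fintype n] [DecidableEq n]

theorem diagonal_mem_unitaryGroup {α : Type*} [CommRing α] [StarRing α] {v : n → α}
    (hv : ∀ i, v i ∈ unitary α) : diagonal v ∈ unitaryGroup n α := by
  rw [mem_unitaryGroup_iff', star_eq_conjTranspose, diagonal_conjTranspose, diagonal_mul_diagonal,
    ← diagonal_one]
  exact congrArg diagonal (funext fun i => Unitary.star_mul_self_of_mem (hv i))

theorem permMatrix_mem_unitaryGroup {α : Type*} [CommRing α] [StarRing α] (σ : Equiv.Perm n) :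
    σ.permMatrix α ∈ unitaryGroup n α := by
  rw [mem_unitaryGroup_iff', star_eq_conjTranspose, conjTranspose_permMatrix, ← permMatrix_mul,
    mul_inv_cancel, permMatrix_one]

theorem l2_opNorm_single {𝕜 m : Type*} [RCLike 𝕜] [Fintype m] [DecidableEq m] (i : m) (j : n)
    (c : 𝕜) : ‖single i j c‖ = ‖c‖ := by
  have h : ‖single i j c‖ * ‖single i j c‖ = ‖c‖ * ‖c‖ := by
    rw [← l2_opNorm_conjTranspose_mul_self, conjTranspose_single, single_mul_single_same,
      ← diagonal_single, l2_opNorm_diagonal, Pi.norm_single, norm_mul, norm_star]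
  exact (mul_self_inj (norm_nonneg _) (norm_nonneg _)).mp h

end Matrix

open Matrix

section ClockShift

variable {R : Type*}

def clockMatrix [Monoid R] [Zero R] (n : ℕ) (lam : R) : Matrix (Fin n) (Fin n) R :=
  diagonal fun j => lam ^ (j : ℕ)

-- `σ.permMatrix` has its ones at `(i, σ i)`, so `V e_j = e_{j+1}` needs `σ = (j ↦ j + 1)⁻¹`.
def shiftMatrix (R : Type*) [Zero R] [One R] (n : ℕ) : Matrix (Fin n) (Fin n) R :=
  (finRotate n)⁻¹.permMatrix R

theorem shiftMatrix_apply [Zero R] [One R] {n : ℕ} (i j : Fin n) :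
    shiftMatrix R n i j = if (i : ℕ) = ((j : ℕ) + 1) % n then 1 else 0 := by
  simp only [shiftMatrix, PEquiv.toMatrix_apply, Equiv.toPEquiv_apply, Option.mem_def,
    Option.some_inj, Equiv.Perm.inv_eq_iff_eq, Fin.ext_iff, val_finRotate]

theorem clockMatrix_mem_unitaryGroup {𝕜 : Type*} [RCLike 𝕜] (n : ℕ) {lam : 𝕜} (hlam : ‖lam‖ = 1) :
    clockMatrix n lam ∈ unitaryGroup (Fin n) 𝕜 :=
  diagonal_mem_unitaryGroup fun j =>
    pow_mem (RCLike.mem_unitary_of_norm_eq_one hlam) (j : ℕ)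

theorem shiftMatrix_mem_unitaryGroup [CommRing R] [StarRing R] (n : ℕ) :
    shiftMatrix R n ∈ unitaryGroup (Fin n) R :=
  permMatrix_mem_unitaryGroup _

theorem clockMatrix_mul_shiftMatrix_sub_smul [CommRing R] (m : ℕ) (lam : R) :
    clockMatrix (m + 1) lam * shiftMatrix R (m + 1)
        - lam • (shiftMatrix R (m + 1) * clockMatrix (m + 1) lam)
      = single 0 (Fin.last m) (1 - lam ^ (m + 1)) := by
  ext i j
  simp only [clockMatrix, shiftMatrix, Matrix.sub_apply, Matrix.smul_apply, diagonal_mul, mul_diagonal,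
    PEquiv.toMatrix_apply, Equiv.toPEquiv_apply, Option.mem_def, Option.some.injEq,
    Equiv.Perm.inv_eq_iff_eq, smul_eq_mul]
  by_cases hj : j = Fin.last m
  · subst hj
    rw [finRotate_last]
    by_cases hi : i = 0
    · subst hi
      simp [pow_succ']
    · simp [hi, single_apply_of_row_ne (Ne.symm hi)]
  · rw [single_apply_of_col_ne _ _ (Ne.symm hj)]
    split_ifs with hi
    · rw [hi, coe_finRotate_of_ne_last hj, pow_succ']
      ring
    · ring

end ClockShift

/-- The clock matrix `U_{n,λ}` and shift matrix `V_n` are unitary and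
`‖U V - λ V U‖ = |λⁿ - 1|` in the operator norm, where `|λ| = 1`. -/
theorem clock_shift_commutator_norm
    (n : ℕ) (hn : 0 < n) (lam : ℂ) (hlam : ‖lam‖ = 1)
    (U V : Matrix (Fin n) (Fin n) ℂ)
    (hU : U = Matrix.diagonal fun j : Fin n => lam ^ (j : ℕ))
    (hV : V = Matrix.of fun i j : Fin n => if (i : ℕ) = ((j : ℕ) + 1) % n then (1 : ℂ) else 0) :
    U ∈ Matrix.unitaryGroup (Fin n) ℂ ∧
    V ∈ Matrix.unitaryGroup (Fin n) ℂ ∧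
    ‖U * V - lam • (V * U)‖ = ‖lam ^ n - 1‖ := by
  obtain ⟨m, rfl⟩ := Nat.exists_eq_add_one_of_ne_zero hn.ne'
  have hU' : U = clockMatrix (m + 1) lam := hU
  have hV' : V = shiftMatrix ℂ (m + 1) := by
    rw [hV]
    ext i j
    rw [of_apply, shiftMatrix_apply]
  subst hU' hV'
  refine ⟨clockMatrix_mem_unitaryGroup _ hlam, shiftMatrix_mem_unitaryGroup _, ?_⟩
  rw [clockMatrix_mul_shiftMatrix_sub_smul, l2_opNorm_single, norm_sub_rev]
end
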